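/- Let G be a finite K_{1,1,3}-free series-parallel graph with SPQ-tree T, and let μ be a P-node of T whose pertinent graph G_μ contains the edge st between its terminals. Then no child of μ is an S-node of Type B, and at most two children of μ are S-nodes of Type C. -/

import Mathlib

open Set

/-! ### `K_{1,1,3}` and `K_{1,1,3}`-freeness -/

/-- The complete tripartite graph `K_{1,1,3}`: vertices `0, 1` are the two adjacent
vertices, and `2, 3, 4` are pairwise non-adjacent, each adjacent to `0` and `1`. -/
def K113 : SimpleGraph (Fin 5) where
  Adj u v := u ≠ v ∧ ((u : ℕ) < 2 ∨ (v : ℕ) < 2)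
  symm := ⟨fun u v h => ⟨h.1.symm, h.2.symm⟩⟩
  loopless := ⟨fun u h => h.1 rfl⟩

/-- `G` contains no subgraph isomorphic to `K_{1,1,3}`. -/
def K113Free {V : Type} (G : SimpleGraph V) : Prop :=
  ¬ ∃ f : Fin 5 → V, Function.Injective f ∧ ∀ u v, K113.Adj u v → G.Adj (f u) (f v)

/-! ### SPQ-trees of two-terminal series-parallel graphs -/

mutual
/-- A (canonical) SPQ decomposition tree over the vertex type `V`.  Each node stores
its source and its target. -/
inductive SPQ (V : Type) : Type where
  | Q : V → V → SPQ V
  | S : V → V → SPQList V → SPQ V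
  | P : V → V → SPQList V → SPQ V
inductive SPQList (V : Type) : Type where
  | nil : SPQList V
  | cons : SPQ V → SPQList V → SPQList V
end

namespace SPQList
def toList {V : Type} : SPQList V → List (SPQ V)
  | .nil => []
  | .cons c cs => c :: cs.toList
end SPQList

namespace SPQ

def src {V : Type} : SPQ V → V
  | .Q s _ => s
  | .S s _ _ => s
  | .P s _ _ => s

def tgt {V : Type} : SPQ V → V
  | .Q _ t => t
  | .S _ t _ => t
  | .P _ t _ => t

def isQ {V : Type} : SPQ V → Prop
  | .Q _ _ => True
  | _ => False

def isS {V : Type} : SPQ V → Prop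
  | .S _ _ _ => True
  | _ => False

def isP {V : Type} : SPQ V → Prop
  | .P _ _ _ => True
  | _ => False

def children {V : Type} : SPQ V → List (SPQ V)
  | .Q _ _ => []
  | .S _ _ cs => cs.toList
  | .P _ _ cs => cs.toList

end SPQ

mutual
/-- The vertex set of the pertinent graph of an SPQ node. -/
def SPQ.vertSet {V : Type} : SPQ V → Set V
  | .Q s t => {s, t}
  | .S s t cs => {s, t} ∪ SPQList.vertSetL cs
  | .P s t cs => {s, t} ∪ SPQList.vertSetL cs
def SPQList.vertSetL {V : Type} : SPQList V → Set V
  | .nil => ∅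
  | .cons c cs => SPQ.vertSet c ∪ SPQList.vertSetL cs
end

mutual
/-- The (one-directional) adjacency of the pertinent graph of an SPQ node. -/
def SPQ.adjRel {V : Type} : SPQ V → V → V → Prop
  | .Q s t, u, v => u = s ∧ v = t
  | .S _ _ cs, u, v => SPQList.adjRelL cs u v
  | .P _ _ cs, u, v => SPQList.adjRelL cs u v
def SPQList.adjRelL {V : Type} : SPQList V → V → V → Prop
  | .nil, _, _ => False
  | .cons c cs, u, v => SPQ.adjRel c u v ∨ SPQList.adjRelL cs u v
end

/-- The pertinent graph `G_μ` of an SPQ node `μ`, as a simple graph on the ambient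
vertex type (vertices outside `μ.vertSet` are isolated). -/
def SPQ.pertinentGraph {V : Type} (μ : SPQ V) : SimpleGraph V where
  Adj u v := u ≠ v ∧ (μ.adjRel u v ∨ μ.adjRel v u)
  symm := ⟨fun _ _ h => ⟨h.1.symm, h.2.symm⟩⟩
  loopless := ⟨fun _ h => h.1 rfl⟩

/-- The pertinent graph of `μ` contains the edge between the two terminals of `μ`. -/
def SPQ.hasTermEdge {V : Type} (μ : SPQ V) : Prop :=
  μ.pertinentGraph.Adj μ.src μ.tgt

/-- `chainFrom t s l`: the list `l` of SPQ nodes forms a series chain from the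
terminal `t` to the terminal `s` (the node listed first is incident to `t`). -/
def SPQ.chainFrom {V : Type} (t s : V) : List (SPQ V) → Prop
  | [] => False
  | [c] => SPQ.tgt c = t ∧ SPQ.src c = s
  | c :: c' :: rest => SPQ.tgt c = t ∧ SPQ.chainFrom (SPQ.src c) s (c' :: rest)

/-- Vertex sets of the members of a series chain meet only in the shared terminals of
consecutive members. -/
def SPQ.seriesPairwise {V : Type} (l : List (SPQ V)) : Prop :=
  ∀ i j : Fin l.length, (i : ℕ) < (j : ℕ) →
    (l.get i).vertSet ∩ (l.get j).vertSet ⊆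
      (if (j : ℕ) = (i : ℕ) + 1 then {(l.get i).src} else (∅ : Set V))

mutual
/-- Well-formedness of an SPQ tree: it encodes a genuine (canonical) SPQ
decomposition of a two-terminal series-parallel graph. -/
def SPQ.WF {V : Type} : SPQ V → Prop
  | .Q s t => s ≠ t
  | .S s t cs =>
      s ≠ t ∧ 2 ≤ cs.toList.length ∧ SPQList.WFL cs ∧
      (∀ c ∈ cs.toList, SPQ.isP c ∨ SPQ.isQ c) ∧
      SPQ.chainFrom t s cs.toList ∧ SPQ.seriesPairwise cs.toList
  | .P s t cs =>
      s ≠ t ∧ 2 ≤ cs.toList.length ∧ SPQList.WFL cs ∧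
      (∀ c ∈ cs.toList, SPQ.isS c ∨ SPQ.isQ c) ∧
      (∀ c ∈ cs.toList, SPQ.src c = s ∧ SPQ.tgt c = t) ∧
      (∀ i j : Fin cs.toList.length, (i : ℕ) < (j : ℕ) →
        (cs.toList.get i).vertSet ∩ (cs.toList.get j).vertSet ⊆ ({s, t} : Set V)) ∧
      (∀ i j : Fin cs.toList.length,
        SPQ.isQ (cs.toList.get i) → SPQ.isQ (cs.toList.get j) → i = j)
def SPQList.WFL {V : Type} : SPQList V → Prop
  | .nil => True
  | .cons c cs => SPQ.WF c ∧ SPQList.WFL cs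
end

mutual
/-- `ν` is a node of the SPQ tree rooted at the given node. -/
def SPQ.MemTree {V : Type} (ν : SPQ V) : SPQ V → Prop
  | .Q s t => ν = .Q s t
  | .S s t cs => ν = .S s t cs ∨ SPQList.MemTreeL ν cs
  | .P s t cs => ν = .P s t cs ∨ SPQList.MemTreeL ν cs
def SPQList.MemTreeL {V : Type} (ν : SPQ V) : SPQList V → Prop
  | .nil => False
  | .cons c cs => SPQ.MemTree ν c ∨ SPQList.MemTreeL ν cs
end

/-- At most two entries of `l` satisfy `Pr`. -/
def AtMostTwoOn {α : Type} (Pr : α → Prop) (l : List α) : Prop :=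
  ∀ i j k : Fin l.length, Pr (l.get i) → Pr (l.get j) → Pr (l.get k) →
    i = j ∨ i = k ∨ j = k

/-- Exactly two entries of `l` satisfy `Pr`. -/
def ExactlyTwoOn {α : Type} (Pr : α → Prop) (l : List α) : Prop :=
  ∃ i j : Fin l.length, i ≠ j ∧ Pr (l.get i) ∧ Pr (l.get j) ∧
    ∀ k : Fin l.length, Pr (l.get k) → k = i ∨ k = j

/-- Exactly one entry of `l` satisfies `Pr`. -/
def ExactlyOneOn {α : Type} (Pr : α → Prop) (l : List α) : Prop :=
  ∃ i : Fin l.length, Pr (l.get i) ∧ ∀ k : Fin l.length, Pr (l.get k) → k = i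

namespace SPQ

/-- A critical S-node: it has exactly two children and both children's pertinent
graphs contain the edge between their own terminals. -/
def IsCriticalS {V : Type} (μ : SPQ V) : Prop :=
  μ.isS ∧ μ.children.length = 2 ∧ ∀ c ∈ μ.children, SPQ.hasTermEdge c

/-- A bad P-node: its pertinent graph contains the edge between its terminals and it
has exactly two critical S-node children. -/
def IsBadP {V : Type} (μ : SPQ V) : Prop :=
  μ.isP ∧ μ.hasTermEdge ∧ ExactlyTwoOn SPQ.IsCriticalS μ.children

/-- An almost-bad P-node: its pertinent graph contains the edge between its terminals
and it has exactly one critical S-node child. -/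
def IsAlmostBadP {V : Type} (μ : SPQ V) : Prop :=
  μ.isP ∧ μ.hasTermEdge ∧ ExactlyOneOn SPQ.IsCriticalS μ.children

/-- A forbidden P-node: its pertinent graph contains the edge between its terminals
and it has more than two critical S-node children. -/
def IsForbiddenP {V : Type} (μ : SPQ V) : Prop :=
  μ.isP ∧ μ.hasTermEdge ∧ ¬ AtMostTwoOn SPQ.IsCriticalS μ.children

/-- A good P-node: one that is neither almost bad, nor bad, nor forbidden. -/
def IsGoodP {V : Type} (μ : SPQ V) : Prop :=
  μ.isP ∧ ¬ μ.IsAlmostBadP ∧ ¬ μ.IsBadP ∧ ¬ μ.IsForbiddenP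

/-- Type A S-node. -/
def IsTypeA {V : Type} (μ : SPQ V) : Prop :=
  μ.isS ∧ (2 < μ.children.length ∨
    (μ.children.length = 2 ∧ ∃ c ∈ μ.children, ¬ SPQ.hasTermEdge c))

/-- Type B S-node. -/
def IsTypeB {V : Type} (μ : SPQ V) : Prop :=
  μ.isS ∧ μ.children.length = 2 ∧ (∀ c ∈ μ.children, SPQ.hasTermEdge c) ∧
    ∃ c ∈ μ.children, SPQ.IsBadP c

/-- Type C S-node. -/
def IsTypeC {V : Type} (μ : SPQ V) : Prop :=
  μ.isS ∧ μ.children.length = 2 ∧ (∀ c ∈ μ.children, SPQ.hasTermEdge c) ∧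
    ∀ c ∈ μ.children, ¬ SPQ.IsBadP c

end SPQ

/-- The series-parallel graph obtained from the two-terminal series-parallel graph of
the SPQ tree `τ` by adding the reference edge between its terminals. -/
def spGraph {V : Type} (τ : SPQ V) : SimpleGraph V :=
  τ.pertinentGraph ⊔ SimpleGraph.fromEdgeSet {s(τ.src, τ.tgt)}

/-- `H` is a two-terminal series-parallel graph with vertex set `A`, source `s` and
target `t`: it is the pertinent graph of some well-formed SPQ tree. -/
def IsTTSPWith {V : Type} (H : SimpleGraph V) (A : Set V) (s t : V) : Prop :=
  ∃ μ : SPQ V, SPQ.WF μ ∧ μ.src = s ∧ μ.tgt = t ∧ μ.vertSet = A ∧ μ.pertinentGraph = H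

/-! A critical S-child `s – x – t` of a P-node with terminals `s, t` contributes a common
neighbour `x` of `s` and `t` that lies in no other child. Since `st` is an edge, three
critical (in particular three Type C) children give a `K_{1,1,3}`. A Type B child
`s – x – t` has a bad P-child whose terminals are `s, x` or `x, t`: these are adjacent,
have two private common neighbours from the two critical children of the bad P-node, and
a third one outside it, namely the remaining terminal `t` or `s`. -/

theorem K113Free.eq_or_eq_or_eq_of_adj {V : Type} {G : SimpleGraph V} (hG : K113Free G)
    {a b w₁ w₂ w₃ : V} (hab : G.Adj a b) (ha₁ : G.Adj a w₁) (ha₂ : G.Adj a w₂)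
    (ha₃ : G.Adj a w₃) (hb₁ : G.Adj b w₁) (hb₂ : G.Adj b w₂) (hb₃ : G.Adj b w₃) :
    w₁ = w₂ ∨ w₁ = w₃ ∨ w₂ = w₃ := by
  by_contra! h
  obtain ⟨h₁₂, h₁₃, h₂₃⟩ := h
  refine hG ⟨![a, b, w₁, w₂, w₃], ?_, ?_⟩
  · have := hab.ne; have := ha₁.ne; have := ha₂.ne; have := ha₃.ne
    have := hb₁.ne; have := hb₂.ne; have := hb₃.ne
    intro u v huv
    fin_cases u <;> fin_cases v <;> simp_all [eq_comm]
  · intro u v huv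
    fin_cases u <;> fin_cases v <;> simp_all [K113, G.adj_comm]

theorem AtMostTwoOn.mono {α : Type} {p q : α → Prop} {l : List α} (h : AtMostTwoOn p l)
    (hqp : ∀ a, q a → p a) : AtMostTwoOn q l :=
  fun i j k hi hj hk => h i j k (hqp _ hi) (hqp _ hj) (hqp _ hk)

namespace SPQList

variable {V : Type} {c : SPQ V}

theorem WFL.wf_of_mem : ∀ {cs : SPQList V}, cs.WFL → c ∈ cs.toList → c.WF
  | .cons d ds, ⟨hd, hds⟩, hc => by
    rcases List.mem_cons.mp hc with rfl | hc
    exacts [hd, hds.wf_of_mem hc]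

theorem adjRelL_of_mem {u v : V} :
    ∀ {cs : SPQList V}, c ∈ cs.toList → c.adjRel u v → cs.adjRelL u v
  | .cons d ds, hc, h => by
    rcases List.mem_cons.mp hc with rfl | hc
    exacts [Or.inl h, Or.inr (adjRelL_of_mem hc h)]

theorem vertSet_subset_vertSetL :
    ∀ {cs : SPQList V}, c ∈ cs.toList → c.vertSet ⊆ cs.vertSetL
  | .cons d ds, hc => by
    rcases List.mem_cons.mp hc with rfl | hc
    exacts [subset_union_left, (vertSet_subset_vertSetL hc).trans subset_union_right]

end SPQList

namespace SPQ

variable {V : Type}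

theorem src_mem_vertSet (μ : SPQ V) : μ.src ∈ μ.vertSet := by
  cases μ <;> simp [src, vertSet]

theorem tgt_mem_vertSet (μ : SPQ V) : μ.tgt ∈ μ.vertSet := by
  cases μ <;> simp [tgt, vertSet]

theorem WF.of_mem_children {μ c : SPQ V} (hμ : μ.WF) (hc : c ∈ μ.children) : c.WF := by
  cases μ with
  | Q => cases hc
  | S _ _ cs => exact hμ.2.2.1.wf_of_mem hc
  | P _ _ cs => exact hμ.2.2.1.wf_of_mem hc

theorem pertinentGraph_le_of_mem_children {μ c : SPQ V} (hc : c ∈ μ.children) :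
    c.pertinentGraph ≤ μ.pertinentGraph := by
  rintro u v ⟨huv, h⟩
  refine ⟨huv, ?_⟩
  cases μ with
  | Q => cases hc
  | S _ _ cs => exact h.imp (SPQList.adjRelL_of_mem hc) (SPQList.adjRelL_of_mem hc)
  | P _ _ cs => exact h.imp (SPQList.adjRelL_of_mem hc) (SPQList.adjRelL_of_mem hc)

theorem vertSet_subset_of_mem_children {μ c : SPQ V} (hc : c ∈ μ.children) :
    c.vertSet ⊆ μ.vertSet := by
  cases μ with
  | Q => cases hc
  | S _ _ cs => exact (SPQList.vertSet_subset_vertSetL hc).trans subset_union_right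
  | P _ _ cs => exact (SPQList.vertSet_subset_vertSetL hc).trans subset_union_right

mutual
theorem MemTree.of_forall_children {p : SPQ V → Prop}
    (hp : ∀ μ, p μ → ∀ c ∈ μ.children, p c) {ν : SPQ V} :
    ∀ {μ : SPQ V}, ν.MemTree μ → p μ → p ν
  | .Q _ _, h, hμ => (h : _ = _) ▸ hμ
  | .S _ _ _, h, hμ =>
    h.elim (fun h => h ▸ hμ) fun h => SPQList.MemTreeL.of_forall_children hp h (hp _ hμ)
  | .P _ _ _, h, hμ =>
    h.elim (fun h => h ▸ hμ) fun h => SPQList.MemTreeL.of_forall_children hp h (hp _ hμ)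

theorem _root_.SPQList.MemTreeL.of_forall_children {p : SPQ V → Prop}
    (hp : ∀ μ, p μ → ∀ c ∈ μ.children, p c) {ν : SPQ V} :
    ∀ {cs : SPQList V}, SPQList.MemTreeL ν cs → (∀ c ∈ cs.toList, p c) → p ν
  | .cons c _, h, hcs =>
    h.elim (fun h => MemTree.of_forall_children hp h (hcs c List.mem_cons_self)) fun h =>
      SPQList.MemTreeL.of_forall_children hp h fun d hd => hcs d (List.mem_cons_of_mem _ hd)
end

theorem WF.exists_children_eq_pair {σ : SPQ V} (hσ : σ.WF) (hS : σ.isS)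
    (hlen : σ.children.length = 2) :
    ∃ c₁ c₂, σ.children = [c₁, c₂] ∧ c₁.tgt = σ.tgt ∧ c₂.src = σ.src ∧
      c₂.tgt = c₁.src ∧ c₁.vertSet ∩ c₂.vertSet ⊆ {c₁.src} := by
  obtain ⟨s, t, cs, rfl⟩ : ∃ s t cs, σ = .S s t cs := by
    cases σ <;> first | exact ⟨_, _, _, rfl⟩ | cases hS
  obtain ⟨-, -, -, -, hchain, hpw⟩ := hσ
  match cs, hlen, hchain, hpw with
  | .cons c₁ (.cons c₂ .nil), _, ⟨h₁, h₂, h₃⟩, hpw =>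
    refine ⟨c₁, c₂, rfl, h₁, h₃, h₂, fun x hx => ?_⟩
    exact hpw ⟨0, by simp [SPQList.toList]⟩ ⟨1, by simp [SPQList.toList]⟩ Nat.one_pos hx

theorem IsCriticalS.exists_commonNeighbor {σ : SPQ V} (hσ : σ.WF) (hc : σ.IsCriticalS) :
    ∃ x ∈ σ.vertSet, σ.pertinentGraph.Adj σ.src x ∧ σ.pertinentGraph.Adj x σ.tgt := by
  obtain ⟨hS, hlen, hterm⟩ := hc
  obtain ⟨c₁, c₂, hcs, h₁, h₂, h₂₁, -⟩ := hσ.exists_children_eq_pair hS hlen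
  have hc₁ : c₁ ∈ σ.children := by simp [hcs]
  have hc₂ : c₂ ∈ σ.children := by simp [hcs]
  have hx₂ : c₂.pertinentGraph.Adj σ.src c₁.src := h₂ ▸ h₂₁ ▸ hterm c₂ hc₂
  have hx₁ : c₁.pertinentGraph.Adj c₁.src σ.tgt := h₁ ▸ hterm c₁ hc₁
  exact ⟨c₁.src, vertSet_subset_of_mem_children hc₁ c₁.src_mem_vertSet,
    pertinentGraph_le_of_mem_children hc₂ hx₂, pertinentGraph_le_of_mem_children hc₁ hx₁⟩

theorem IsTypeC.isCriticalS {σ : SPQ V} (h : σ.IsTypeC) : σ.IsCriticalS :=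
  ⟨h.1, h.2.1, h.2.2.1⟩

section PNode

variable {s t : V} {cs : SPQList V}

theorem WF.src_tgt_of_mem {c : SPQ V} (h : (P s t cs).WF) (hc : c ∈ cs.toList) :
    c.src = s ∧ c.tgt = t :=
  h.2.2.2.2.1 c hc

theorem WF.eq_of_mem_vertSet {x : V} (h : (P s t cs).WF) {i j : Fin cs.toList.length}
    (hi : x ∈ (cs.toList.get i).vertSet) (hj : x ∈ (cs.toList.get j).vertSet)
    (hs : x ≠ s) (ht : x ≠ t) : i = j := by
  by_contra hij
  have hst := h.2.2.2.2.2.1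
  rcases Fin.lt_or_lt_of_ne hij with hlt | hlt
  · rcases hst i j hlt ⟨hi, hj⟩ with hx | hx <;> contradiction
  · rcases hst j i hlt ⟨hj, hi⟩ with hx | hx <;> contradiction

theorem WF.exists_commonNeighbor_of_isCriticalS (h : (P s t cs).WF)
    {i : Fin cs.toList.length} (hi : (cs.toList.get i).IsCriticalS) :
    ∃ x ∈ (cs.toList.get i).vertSet,
      (P s t cs).pertinentGraph.Adj s x ∧ (P s t cs).pertinentGraph.Adj x t := by
  have hmem : cs.toList.get i ∈ (P s t cs).children := List.get_mem _ _
  obtain ⟨hsrc, htgt⟩ := h.src_tgt_of_mem hmem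
  obtain ⟨x, hx, hsx, hxt⟩ := hi.exists_commonNeighbor (h.of_mem_children hmem)
  rw [hsrc] at hsx
  rw [htgt] at hxt
  exact ⟨x, hx, pertinentGraph_le_of_mem_children hmem hsx,
    pertinentGraph_le_of_mem_children hmem hxt⟩

variable {G : SimpleGraph V}

theorem WF.atMostTwoOn_isCriticalS (h : (P s t cs).WF)
    (hle : (P s t cs).pertinentGraph ≤ G) (hst : G.Adj s t) (hG : K113Free G) :
    AtMostTwoOn IsCriticalS cs.toList := by
  intro i j k hi hj hk
  obtain ⟨x, hx, hsx, hxt⟩ := h.exists_commonNeighbor_of_isCriticalS hi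
  obtain ⟨y, hy, hsy, hyt⟩ := h.exists_commonNeighbor_of_isCriticalS hj
  obtain ⟨z, hz, hsz, hzt⟩ := h.exists_commonNeighbor_of_isCriticalS hk
  have hxs : x ≠ s := hsx.ne.symm
  have hxt' : x ≠ t := hxt.ne
  have hys : y ≠ s := hsy.ne.symm
  have hyt' : y ≠ t := hyt.ne
  rcases hG.eq_or_eq_or_eq_of_adj hst (hle hsx) (hle hsy) (hle hsz) (hle hxt).symm
      (hle hyt).symm (hle hzt).symm with rfl | rfl | rfl
  · exact Or.inl (h.eq_of_mem_vertSet hx hy hxs hxt')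
  · exact Or.inr (Or.inl (h.eq_of_mem_vertSet hx hz hxs hxt'))
  · exact Or.inr (Or.inr (h.eq_of_mem_vertSet hy hz hys hyt'))

end PNode

variable {G : SimpleGraph V}

theorem IsBadP.not_K113Free {π : SPQ V} (hπ : π.WF) (hbad : π.IsBadP)
    (hle : π.pertinentGraph ≤ G) {w : V} (hw : w ∉ π.vertSet) (hsw : G.Adj π.src w)
    (htw : G.Adj π.tgt w) : ¬ K113Free G := by
  obtain ⟨hP, hterm, i, j, hij, hi, hj, -⟩ := hbad
  obtain ⟨s, t, cs, rfl⟩ : ∃ s t cs, π = .P s t cs := by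
    cases π <;> first | exact ⟨_, _, _, rfl⟩ | cases hP
  intro hG
  obtain ⟨x, hx, hsx, hxt⟩ := hπ.exists_commonNeighbor_of_isCriticalS hi
  obtain ⟨y, hy, hsy, hyt⟩ := hπ.exists_commonNeighbor_of_isCriticalS hj
  have hmem : ∀ {k}, (cs.toList.get k).vertSet ⊆ (P s t cs).vertSet := fun {_} =>
    vertSet_subset_of_mem_children (List.get_mem _ _)
  rcases hG.eq_or_eq_or_eq_of_adj (hle hterm) (hle hsx) (hle hsy) hsw (hle hxt).symm
      (hle hyt).symm htw with rfl | rfl | rfl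
  · exact hij (hπ.eq_of_mem_vertSet hx hy hsx.ne.symm hxt.ne)
  · exact hw (hmem hx)
  · exact hw (hmem hy)

theorem IsTypeB.not_K113Free {σ : SPQ V} (hσ : σ.WF) (hB : σ.IsTypeB)
    (hle : σ.pertinentGraph ≤ G) (hst : G.Adj σ.src σ.tgt) : ¬ K113Free G := by
  obtain ⟨hS, hlen, hterm, π, hπ, hbad⟩ := hB
  obtain ⟨c₁, c₂, hcs, h₁, h₂, h₂₁, hinter⟩ := hσ.exists_children_eq_pair hS hlen
  have hc₁ : c₁ ∈ σ.children := by simp [hcs]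
  have hc₂ : c₂ ∈ σ.children := by simp [hcs]
  have hle₁ := (pertinentGraph_le_of_mem_children hc₁).trans hle
  have hle₂ := (pertinentGraph_le_of_mem_children hc₂).trans hle
  have hx₂ : c₂.pertinentGraph.Adj σ.src c₁.src := h₂ ▸ h₂₁ ▸ hterm c₂ hc₂
  have hx₁ : c₁.pertinentGraph.Adj c₁.src σ.tgt := h₁ ▸ hterm c₁ hc₁
  rcases List.mem_pair.mp (hcs ▸ hπ) with rfl | rfl
  · have hs : σ.src ∉ π.vertSet := fun hs =>
      hx₂.ne (hinter ⟨hs, h₂ ▸ c₂.src_mem_vertSet⟩)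
    exact hbad.not_K113Free (hσ.of_mem_children hc₁) hle₁ hs (hle₂ hx₂).symm
      (h₁ ▸ hst.symm)
  · have ht : σ.tgt ∉ π.vertSet := fun ht =>
      hx₁.ne (hinter ⟨h₁ ▸ c₁.tgt_mem_vertSet, ht⟩).symm
    exact hbad.not_K113Free (hσ.of_mem_children hc₂) hle₂ ht (h₂ ▸ hst)
      (h₂₁ ▸ hle₁ hx₁)

end SPQ

/-- Observation 2: in the SPQ-tree of a finite `K_{1,1,3}`-free
series-parallel graph, if `μ` is a P-node whose pertinent graph contains the edge
between its terminals, then no child of `μ` is an S-node of Type B and at most two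
children of `μ` are S-nodes of Type C. -/
theorem Pnode_with_term_edge_children {V : Type} [Fintype V] (τ : SPQ V)
    (hwf : SPQ.WF τ) (href : ¬ τ.hasTermEdge)
    (hfree : K113Free (spGraph τ)) :
    ∀ μ : SPQ V, SPQ.MemTree μ τ → μ.isP → μ.hasTermEdge →
      (∀ c ∈ μ.children, ¬ SPQ.IsTypeB c) ∧
      AtMostTwoOn SPQ.IsTypeC μ.children := by
  intro μ hmem hP hterm
  obtain ⟨s, t, cs, rfl⟩ : ∃ s t cs, μ = .P s t cs := by
    cases μ <;> first | exact ⟨_, _, _, rfl⟩ | cases hP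
  have hwfμ : (SPQ.P s t cs).WF :=
    hmem.of_forall_children (fun _ h _ hc => h.of_mem_children hc) hwf
  have hle : (SPQ.P s t cs).pertinentGraph ≤ spGraph τ :=
    hmem.of_forall_children
      (fun _ h _ hc => (SPQ.pertinentGraph_le_of_mem_children hc).trans h) le_sup_left
  have hst : (spGraph τ).Adj s t := hle hterm
  refine ⟨fun c hc hB => ?_, (hwfμ.atMostTwoOn_isCriticalS hle hst hfree).mono
    fun _ => SPQ.IsTypeC.isCriticalS⟩
  obtain ⟨hsrc, htgt⟩ := hwfμ.src_tgt_of_mem hc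
  exact hB.not_K113Free (hwfμ.of_mem_children hc)
    ((SPQ.pertinentGraph_le_of_mem_children hc).trans hle) (hsrc ▸ htgt ▸ hst) hfree
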